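/- arXiv:2512.02831 — 3 statements merged into one kernel-verified Lean document; each statement's English description precedes it below -/
import Mathlib

section
/- Let ℓ : ℝ → ℝ be convex. Let ρ be a probability distribution over a finite class set C, let each class c have a data distribution D_c on X, and let f : X → ℝ^d. Define the unsupervised loss L_un(f) = E_{(c⁺,c⁻)∼ρ²} E_{x,x⁺∼D_{c⁺}, x⁻∼D_{c⁻}} [ℓ(⟨f(x), f(x⁺) − f(x⁻)⟩)] and class means μ_c = E_{x∼D_c}[f(x)]. Then L_un(f) ≥ E_{(c⁺,c⁻)∼ρ²} E_{x∼D_{c⁺}} [ℓ(⟨f(x), μ_{c⁺} − μ_{c⁻}⟩)]. -/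
open RealInnerProductSpace

lemma helper {X : Type*} [Fintype X] (wp wm a b : X → ℝ)
    (hwp1 : ∑ x, wp x = 1) (hwm1 : ∑ x, wm x = 1) :
    ∑ xp : X, ∑ xm : X, wp xp * wm xm * (a xp - b xm)
      = (∑ xp : X, wp xp * a xp) - ∑ xm : X, wm xm * b xm := by
  have : ∀ xp, ∑ xm : X, wp xp * wm xm * (a xp - b xm)
      = wp xp * a xp - wp xp * ∑ xm : X, wm xm * b xm := by
    intro xp
    rw [show wp xp * a xp = ∑ xm : X, wp xp * a xp * wm xm by
        rw [← Finset.mul_sum, hwm1, mul_one],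
      Finset.mul_sum, ← Finset.sum_sub_distrib]
    exact Finset.sum_congr rfl fun xm _ => by ring
  rw [Finset.sum_congr rfl fun xp _ => this xp, Finset.sum_sub_distrib,
    ← Finset.sum_mul, hwp1, one_mul]

lemma jensen_key {d : ℕ} {X : Type*} [Fintype X]
    (ℓ : ℝ → ℝ) (hℓ : ConvexOn ℝ Set.univ ℓ)
    (wp wm : X → ℝ) (hwp0 : ∀ x, 0 ≤ wp x) (hwm0 : ∀ x, 0 ≤ wm x)
    (hwp1 : ∑ x, wp x = 1) (hwm1 : ∑ x, wm x = 1)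
    (f : X → EuclideanSpace ℝ (Fin d)) (v : EuclideanSpace ℝ (Fin d)) :
    ℓ ⟪v, (∑ xp : X, wp xp • f xp) - (∑ xm : X, wm xm • f xm)⟫ ≤
      ∑ xp : X, ∑ xm : X, wp xp * wm xm * ℓ ⟪v, f xp - f xm⟫ := by
  have key := hℓ.map_sum_le (t := (Finset.univ : Finset (X × X)))
      (w := fun p => wp p.1 * wm p.2) (p := fun p => ⟪v, f p.1 - f p.2⟫)
      (fun p _ => mul_nonneg (hwp0 p.1) (hwm0 p.2))
      (by rw [← Finset.univ_product_univ, Finset.sum_product]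
          simp [← Finset.mul_sum, hwm1, hwp1])
      (fun p _ => Set.mem_univ _)
  have harg : (∑ p : X × X, (wp p.1 * wm p.2) • ⟪v, f p.1 - f p.2⟫)
      = ⟪v, (∑ xp : X, wp xp • f xp) - (∑ xm : X, wm xm • f xm)⟫ := by
    rw [← Finset.univ_product_univ, Finset.sum_product]
    simp only [smul_eq_mul, inner_sub_right, inner_sum, real_inner_smul_right]
    exact helper wp wm (fun x => ⟪v, f x⟫) (fun x => ⟪v, f x⟫) hwp1 hwm1
  rw [harg] at key
  calc ℓ ⟪v, (∑ xp : X, wp xp • f xp) - (∑ xm : X, wm xm • f xm)⟫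
      ≤ ∑ p : X × X, (wp p.1 * wm p.2) * ℓ ⟪v, f p.1 - f p.2⟫ := key
    _ = _ := by rw [← Finset.univ_product_univ, Finset.sum_product]

/-- Jensen step of the latent class model.
The unsupervised contrastive loss dominates the loss evaluated at class means. -/
theorem unsupervised_loss_ge_mean_loss
    {d : ℕ} {X C : Type*} [Fintype X] [Fintype C]
    (ℓ : ℝ → ℝ) (hℓ : ConvexOn ℝ Set.univ ℓ)
    (ρ : C → ℝ) (hρ0 : ∀ c, 0 ≤ ρ c) (hρ1 : ∑ c, ρ c = 1)
    (D : C → X → ℝ) (hD0 : ∀ c x, 0 ≤ D c x) (hD1 : ∀ c, ∑ x, D c x = 1)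
    (f : X → EuclideanSpace ℝ (Fin d)) :
    (∑ cp : C, ∑ cm : C, ρ cp * ρ cm *
        ∑ x : X, D cp x * ∑ xp : X, ∑ xm : X, D cp xp * D cm xm *
          ℓ ⟪f x, f xp - f xm⟫)
      ≥
    (∑ cp : C, ∑ cm : C, ρ cp * ρ cm *
        ∑ x : X, D cp x *
          ℓ ⟪f x, (∑ xp : X, D cp xp • f xp) - (∑ xm : X, D cm xm • f xm)⟫) := by
  apply Finset.sum_le_sum; intro cp _
  apply Finset.sum_le_sum; intro cm _
  apply mul_le_mul_of_nonneg_left _ (mul_nonneg (hρ0 cp) (hρ0 cm))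
  apply Finset.sum_le_sum; intro x _
  exact mul_le_mul_of_nonneg_left
    (jensen_key ℓ hℓ (D cp) (D cm) (hD0 cp) (hD0 cm) (hD1 cp) (hD1 cm) f (f x))
    (hD0 cp x)
end

section
/- Let x, x⁺, x⁻ be i.i.d. samples from a distribution D on X, let f : X → ℝ^d, let Σ be the covariance matrix of f(x) for x ∼ D, and let Z = ⟨f(x), f(x⁻) − f(x⁺)⟩. Then E[|Z|] ≤ √2 · √(‖Σ‖₂) · E_{x∼D}[‖f(x)‖], where ‖Σ‖₂ is the operator (spectral) norm of Σ. -/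
open RealInnerProductSpace Finset

/-!
Condition on `x` and put `u = f x`. Since `x⁺, x⁻` are independent copies,
`E[⟪u, f x⁻ - f x⁺⟫²] = 2 Var⟪u, f x⁺⟫ = 2 uᵀΣu ≤ 2 ‖Σ‖₂ ‖u‖²`, so by Cauchy–Schwarz the
conditional expectation of `|Z|` is at most `√2 √‖Σ‖₂ ‖f x‖`; now average over `x`.
-/

lemma sum_mul_abs_le_sqrt_sum_mul_sq {ι : Type*} (s : Finset ι) {w : ι → ℝ}
    (hw : ∀ i, 0 ≤ w i) (hw1 : ∑ i ∈ s, w i = 1) (a : ι → ℝ) :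
    ∑ i ∈ s, w i * |a i| ≤ √(∑ i ∈ s, w i * a i ^ 2) := by
  have h := Real.sum_sqrt_mul_sqrt_le s hw fun i => mul_nonneg (hw i) (sq_nonneg (a i))
  rw [hw1, Real.sqrt_one, one_mul] at h
  refine le_of_eq_of_le (sum_congr rfl fun i _ => ?_) h
  rw [← Real.sqrt_mul (hw i), show w i * (w i * a i ^ 2) = (w i * |a i|) ^ 2 by
    rw [mul_pow, sq_abs]; ring, Real.sqrt_sq (mul_nonneg (hw i) (abs_nonneg _))]

lemma sum_sum_mul_sub_sq_eq_two_mul_sum_mul_sub_sq {X : Type*} [Fintype X] {p : X → ℝ}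
    (hp1 : ∑ x, p x = 1) (g : X → ℝ) :
    ∑ a, ∑ b, p a * p b * (g b - g a) ^ 2 = 2 * ∑ y, p y * (g y - ∑ z, p z * g z) ^ 2 := by
  -- both sides equal `2 (E[g²] - m²)`
  set m := ∑ z, p z * g z with hm
  have expand : ∀ a b, p a * p b * (g b - g a) ^ 2
      = p a * (p b * g b ^ 2) - 2 * (p a * g a) * (p b * g b) + p a * g a ^ 2 * p b :=
    fun a b => by ring
  have expand' : ∀ y, p y * (g y - m) ^ 2 = p y * g y ^ 2 - 2 * m * (p y * g y) + m ^ 2 * p y :=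
    fun y => by ring
  simp only [expand, expand', sum_add_distrib, sum_sub_distrib, ← mul_sum, ← sum_mul, ← hm, hp1]
  ring

lemma sum_sum_mul_abs_sub_le {X : Type*} [Fintype X] {p : X → ℝ} (hp0 : ∀ x, 0 ≤ p x)
    (hp1 : ∑ x, p x = 1) (g : X → ℝ) :
    ∑ a, ∑ b, p a * p b * |g b - g a| ≤ √(2 * ∑ y, p y * (g y - ∑ z, p z * g z) ^ 2) := by
  rw [← sum_sum_mul_sub_sq_eq_two_mul_sum_mul_sub_sq hp1]
  simpa only [Fintype.sum_prod_type] using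
    sum_mul_abs_le_sqrt_sum_mul_sq univ (w := fun q : X × X => p q.1 * p q.2)
      (fun q => mul_nonneg (hp0 q.1) (hp0 q.2))
      (by rw [Fintype.sum_prod_type, ← sum_mul_sum, hp1, one_mul]) (fun q => g q.2 - g q.1)

lemma inner_toEuclideanLin_self_eq_sum_mul_inner_sq {d : ℕ} {X : Type*} [Fintype X]
    (p : X → ℝ) (v : X → EuclideanSpace ℝ (Fin d)) {S : Matrix (Fin d) (Fin d) ℝ}
    (hS : ∀ i j, S i j = ∑ y, p y * (v y i * v y j)) (u : EuclideanSpace ℝ (Fin d)) :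
    ⟪u, Matrix.toEuclideanLin S u⟫ = ∑ y, p y * ⟪u, v y⟫ ^ 2 := by
  have hS' : S = ∑ y, p y • Matrix.vecMulVec (v y) (v y) := by
    ext i j
    simp [hS, Matrix.sum_apply, Matrix.vecMulVec_apply]
  rw [EuclideanSpace.inner_eq_star_dotProduct, Matrix.ofLp_toLpLin, Matrix.toLin'_apply, hS']
  simp only [Matrix.sum_mulVec, Matrix.smul_mulVec, Matrix.vecMulVec_mulVec, sum_dotProduct,
    smul_dotProduct]
  refine sum_congr rfl fun y _ => ?_
  rw [EuclideanSpace.inner_eq_star_dotProduct, MulOpposite.smul_eq_mul_unop, MulOpposite.unop_op,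
    smul_eq_mul, star_trivial, sq, mul_comm (_ ⬝ᵥ _)]

lemma inner_apply_self_le_opNorm_mul_sq {E : Type*} [NormedAddCommGroup E] [InnerProductSpace ℝ E]
    (A : E →L[ℝ] E) (u : E) : ⟪u, A u⟫ ≤ ‖A‖ * ‖u‖ ^ 2 :=
  calc ⟪u, A u⟫ ≤ ‖u‖ * ‖A u‖ := real_inner_le_norm _ _
    _ ≤ ‖u‖ * (‖A‖ * ‖u‖) := by gcongr; exact A.le_opNorm u
    _ = ‖A‖ * ‖u‖ ^ 2 := by ring

lemma sum_sum_mul_abs_inner_sub_le {d : ℕ} {X : Type*} [Fintype X] {p : X → ℝ}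
    (hp0 : ∀ x, 0 ≤ p x) (hp1 : ∑ x, p x = 1) {f : X → EuclideanSpace ℝ (Fin d)}
    {μ : EuclideanSpace ℝ (Fin d)} (hμ : μ = ∑ x, p x • f x) {S : Matrix (Fin d) (Fin d) ℝ}
    (hS : ∀ i j, S i j = ∑ x, p x * ((f x i - μ i) * (f x j - μ j)))
    (u : EuclideanSpace ℝ (Fin d)) :
    ∑ a, ∑ b, p a * p b * |⟪u, f b - f a⟫|
      ≤ √2 * √‖LinearMap.toContinuousLinearMap (Matrix.toEuclideanLin S)‖ * ‖u‖ := by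
  set A := LinearMap.toContinuousLinearMap (Matrix.toEuclideanLin S)
  have hmean : ∑ y, p y * ⟪u, f y⟫ = ⟪u, μ⟫ := by
    simp only [hμ, inner_sum, real_inner_smul_right]
  have hvar : ∑ y, p y * (⟪u, f y⟫ - ⟪u, μ⟫) ^ 2 ≤ ‖A‖ * ‖u‖ ^ 2 := by
    simp only [← inner_sub_right]
    rw [← inner_toEuclideanLin_self_eq_sum_mul_inner_sq p (fun y => f y - μ)
      (by simpa only [PiLp.sub_apply] using hS)]
    exact inner_apply_self_le_opNorm_mul_sq A u
  calc ∑ a, ∑ b, p a * p b * |⟪u, f b - f a⟫|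
      = ∑ a, ∑ b, p a * p b * |⟪u, f b⟫ - ⟪u, f a⟫| := by simp only [inner_sub_right]
    _ ≤ √(2 * ∑ y, p y * (⟪u, f y⟫ - ⟪u, μ⟫) ^ 2) := by
      rw [← hmean]; exact sum_sum_mul_abs_sub_le hp0 hp1 _
    _ ≤ √(2 * (‖A‖ * ‖u‖ ^ 2)) := by gcongr
    _ = √2 * √‖A‖ * ‖u‖ := by
      rw [Real.sqrt_mul zero_le_two, Real.sqrt_mul (norm_nonneg A), Real.sqrt_sq (norm_nonneg u),
        mul_assoc]

/-- if `x, x⁺, x⁻` are i.i.d. from `D` (here a finitely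
supported distribution given by weights `p`) and
`Z = ⟨f(x), f(x⁻) − f(x⁺)⟩`, then
`E[|Z|] ≤ √2 · √(‖Σ‖₂) · E[‖f(x)‖]`, where `Σ` is the covariance matrix of
`f(x)` and `‖Σ‖₂` its operator norm. -/
theorem abs_inner_diff_expectation_le
    {d : ℕ} {X : Type*} [Fintype X]
    (p : X → ℝ) (hp0 : ∀ x, 0 ≤ p x) (hp1 : ∑ x, p x = 1)
    (f : X → EuclideanSpace ℝ (Fin d))
    (μ : EuclideanSpace ℝ (Fin d)) (hμ : μ = ∑ x, p x • f x)
    (Sig : Matrix (Fin d) (Fin d) ℝ)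
    (hSig : ∀ i j, Sig i j = ∑ x, p x * ((f x i - μ i) * (f x j - μ j))) :
    (∑ x, ∑ xp, ∑ xm, p x * p xp * p xm * |⟪f x, f xm - f xp⟫|)
      ≤ Real.sqrt 2 *
        Real.sqrt ‖LinearMap.toContinuousLinearMap (Matrix.toEuclideanLin Sig)‖ *
        ∑ x, p x * ‖f x‖ := by
  set A := LinearMap.toContinuousLinearMap (Matrix.toEuclideanLin Sig)
  calc (∑ x, ∑ xp, ∑ xm, p x * p xp * p xm * |⟪f x, f xm - f xp⟫|)
      = ∑ x, p x * ∑ xp, ∑ xm, p xp * p xm * |⟪f x, f xm - f xp⟫| := by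
        simp only [mul_sum, mul_assoc]
    _ ≤ ∑ x, p x * (√2 * √‖A‖ * ‖f x‖) := by
        gcongr with x
        exacts [hp0 x, sum_sum_mul_abs_inner_sub_le hp0 hp1 hμ hSig (f x)]
    _ = √2 * √‖A‖ * ∑ x, p x * ‖f x‖ := by
        simp only [mul_sum, mul_left_comm (p _)]
end

section
/- Let D be a distribution on X, f : X → ℝ^d, and x, x⁺, x₁⁻, …, x_t⁻ i.i.d. draws from D. Let ℓ be the t-way hinge loss ℓ(v) = max(0, 1 + max_i(−v_i)). Then E[ℓ({⟨f(x), f(x⁺) − f(x_i⁻)⟩}_{i=1}^t)] − 1 ≤ c₀ · t · √(‖Σ(f)‖₂) · E_{x∼D}[‖f(x)‖] for an absolute constant c₀ (one may take c₀ = √2), where Σ(f) is the covariance matrix of f(x) under D. -/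
/-!
The hinge loss is at most `1 + ∑ᵢ |zᵢ|` with `zᵢ = ⟪f x, f x⁺ - f xᵢ⁻⟫`, and each `|zᵢ|` has the law of
`|⟪f x, f x⁺ - f y⟫|` for an independent pair `x⁺, y`. For fixed `u = f x`, Jensen bounds
`E |⟪u, f x⁺ - f y⟫|` by the square root of `E ⟪u, f x⁺ - f y⟫² = 2 ⟪u, Σ u⟫ ≤ 2 ‖Σ‖ ‖u‖²`.
-/

open Finset RealInnerProductSpace

lemma max_zero_one_add_sup'_le_one_add_sum_abs {ι : Type*} (s : Finset ι) (hs : s.Nonempty)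
    (g : ι → ℝ) : max 0 (1 + s.sup' hs g) ≤ 1 + ∑ i ∈ s, |g i| := by
  have hsum : 0 ≤ ∑ i ∈ s, |g i| := sum_nonneg fun i _ => abs_nonneg _
  have hsup : s.sup' hs g ≤ ∑ i ∈ s, |g i| :=
    sup'_le _ _ fun i hi =>
      (le_abs_self _).trans (single_le_sum (fun j _ => abs_nonneg (g j)) hi)
  exact max_le (by linarith) (by linarith)

section Product

variable {ι X : Type*} [Fintype ι] [DecidableEq ι] [Fintype X] {p : X → ℝ}

lemma sum_pi_prod_eq_one (hp1 : ∑ x, p x = 1) : ∑ xs : ι → X, ∏ j, p (xs j) = 1 := by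
  rw [← Fintype.prod_sum fun _ y => p y]
  simp [hp1]

lemma sum_pi_prod_mul_apply (hp1 : ∑ x, p x = 1) (i : ι) (g : X → ℝ) :
    ∑ xs : ι → X, (∏ j, p (xs j)) * g (xs i) = ∑ y, p y * g y := by
  have hxs (xs : ι → X) : (∏ j, p (xs j)) * g (xs i)
      = ∏ j, if j = i then p (xs j) * g (xs j) else p (xs j) := by
    rw [← Fintype.prod_ite_eq' i fun j => g (xs j), ← prod_mul_distrib]
    exact prod_congr rfl fun j _ => by split_ifs <;> simp
  simp only [hxs]
  rw [← Fintype.prod_sum fun j y => if j = i then p y * g y else p y,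
    ← Fintype.prod_ite_eq' i fun _ => ∑ y, p y * g y]
  exact prod_congr rfl fun j _ => by split_ifs <;> simp [hp1]

lemma sum_pi_prod_mul_one_add_sum (hp1 : ∑ x, p x = 1) (g : X → ℝ) :
    ∑ xs : ι → X, (∏ j, p (xs j)) * (1 + ∑ i, g (xs i))
      = 1 + Fintype.card ι * ∑ y, p y * g y := by
  simp only [mul_add, mul_one, sum_add_distrib, sum_pi_prod_eq_one hp1]
  conv_lhs => enter [2]; simp only [mul_sum]; rw [sum_comm]
  simp [sum_pi_prod_mul_apply hp1]

end Product

section Weighted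

variable {X : Type*} [Fintype X] {p : X → ℝ}

lemma sum_mul_abs_le_sqrt_sum_mul_sq_s6 (hp0 : ∀ x, 0 ≤ p x) (hp1 : ∑ x, p x = 1) (a : X → ℝ) :
    ∑ x, p x * |a x| ≤ √(∑ x, p x * a x ^ 2) := by
  have jensen := (convexOn_pow 2).map_sum_le (t := univ) (w := p) (p := fun x => |a x|)
    (fun x _ => hp0 x) hp1 (fun x _ => abs_nonneg (a x))
  simp only [smul_eq_mul, sq_abs] at jensen
  exact Real.le_sqrt_of_sq_le jensen

lemma sum_mul_one_add_mul (hp1 : ∑ x, p x = 1) (c : ℝ) (g : X → ℝ) :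
    ∑ x, p x * (1 + c * g x) = 1 + c * ∑ x, p x * g x := by
  simp only [mul_add, mul_one, sum_add_distrib, hp1, mul_sum, mul_left_comm (p _)]

lemma sum_sum_mul_mul_sub_sq (hp1 : ∑ x, p x = 1) (b : X → ℝ) (hb : ∑ x, p x * b x = 0) :
    ∑ x, ∑ y, p x * p y * (b x - b y) ^ 2 = 2 * ∑ x, p x * b x ^ 2 := by
  have expand (x y : X) : p x * p y * (b x - b y) ^ 2
      = p x * (p y * b y ^ 2) + p y * (p x * b x ^ 2) - 2 * (p x * b x) * (p y * b y) := by ring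
  simp only [expand, sum_add_distrib, sum_sub_distrib, ← mul_sum, ← sum_mul, hp1, hb]
  ring

end Weighted

lemma real_inner_le_opNorm_mul_sq {E : Type*} [NormedAddCommGroup E] [InnerProductSpace ℝ E]
    (T : E →L[ℝ] E) (u : E) : ⟪u, T u⟫ ≤ ‖T‖ * ‖u‖ ^ 2 :=
  calc ⟪u, T u⟫ ≤ ‖u‖ * ‖T u‖ := real_inner_le_norm u (T u)
    _ ≤ ‖u‖ * (‖T‖ * ‖u‖) := by gcongr; exact T.le_opNorm u
    _ = ‖T‖ * ‖u‖ ^ 2 := by ring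

lemma inner_toEuclideanLin_eq_sum_mul_inner_sq {d : ℕ} {X : Type*} [Fintype X] (p : X → ℝ)
    (f : X → EuclideanSpace ℝ (Fin d)) (μ : EuclideanSpace ℝ (Fin d))
    (Sig : Matrix (Fin d) (Fin d) ℝ)
    (hSig : ∀ i j, Sig i j = ∑ x, p x * ((f x i - μ i) * (f x j - μ j)))
    (u : EuclideanSpace ℝ (Fin d)) :
    ⟪u, Matrix.toEuclideanLin Sig u⟫ = ∑ x, p x * ⟪u, f x - μ⟫ ^ 2 := by
  simp only [EuclideanSpace.inner_eq_star_dotProduct, Matrix.toLpLin_apply, Matrix.mulVec,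
    dotProduct, hSig, sq, sum_mul, mul_sum, star_trivial, PiLp.sub_apply]
  rw [sum_comm_cycle]
  exact sum_congr rfl fun x _ => sum_congr rfl fun i _ => sum_congr rfl fun j _ => by ring

lemma sum_mul_sum_mul_abs_inner_sub_le {d : ℕ} {X : Type*} [Fintype X] (p : X → ℝ)
    (hp0 : ∀ x, 0 ≤ p x) (hp1 : ∑ x, p x = 1) (f : X → EuclideanSpace ℝ (Fin d))
    (μ : EuclideanSpace ℝ (Fin d)) (hμ : μ = ∑ x, p x • f x) (Sig : Matrix (Fin d) (Fin d) ℝ)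
    (hSig : ∀ i j, Sig i j = ∑ x, p x * ((f x i - μ i) * (f x j - μ j)))
    (u : EuclideanSpace ℝ (Fin d)) :
    ∑ x, p x * ∑ y, p y * |⟪u, f x - f y⟫|
      ≤ √2 * √‖LinearMap.toContinuousLinearMap (Matrix.toEuclideanLin Sig)‖ * ‖u‖ := by
  set Q := LinearMap.toContinuousLinearMap (Matrix.toEuclideanLin Sig)
  set b : X → ℝ := fun x => ⟪u, f x - μ⟫ with hb
  have hb_mean : ∑ x, p x * b x = 0 := by
    simp only [hb, ← real_inner_smul_right, ← inner_sum, smul_sub, sum_sub_distrib, ← sum_smul,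
      hp1, one_smul, ← hμ, sub_self, inner_zero_right]
  have hb_sub (x y : X) : ⟪u, f x - f y⟫ = b x - b y := by
    rw [hb, ← inner_sub_right, sub_sub_sub_cancel_right]
  have hw0 (z : X × X) : 0 ≤ p z.1 * p z.2 := mul_nonneg (hp0 _) (hp0 _)
  have hw1 : ∑ z : X × X, p z.1 * p z.2 = 1 := by
    simp only [Fintype.sum_prod_type, ← mul_sum, hp1, mul_one]
  calc ∑ x, p x * ∑ y, p y * |⟪u, f x - f y⟫|
      = ∑ z : X × X, p z.1 * p z.2 * |b z.1 - b z.2| := by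
        simp only [Fintype.sum_prod_type, mul_sum, hb_sub, mul_assoc]
    _ ≤ √(∑ z : X × X, p z.1 * p z.2 * (b z.1 - b z.2) ^ 2) :=
        sum_mul_abs_le_sqrt_sum_mul_sq_s6 hw0 hw1 _
    _ = √(2 * ⟪u, Q u⟫) := by
        rw [Fintype.sum_prod_type, sum_sum_mul_mul_sub_sq hp1 b hb_mean]
        exact congrArg (fun s => √(2 * s))
          (inner_toEuclideanLin_eq_sum_mul_inner_sq p f μ Sig hSig u).symm
    _ ≤ √(2 * (‖Q‖ * ‖u‖ ^ 2)) := by gcongr; exact real_inner_le_opNorm_mul_sq Q u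
    _ = √2 * √‖Q‖ * ‖u‖ := by
        rw [Real.sqrt_mul zero_le_two, Real.sqrt_mul (norm_nonneg Q), Real.sqrt_sq (norm_nonneg u),
          mul_assoc]

/-- class collision lemma, hinge case: for `x, x⁺, x₁⁻, …, x_t⁻`
i.i.d. from `D` (a finitely supported distribution with weights `p`) and the
`t`-way hinge loss `ℓ(v) = max(0, 1 + maxᵢ(−vᵢ))`, the expected loss exceeds `1`
by at most `√2 · t · √(‖Σ(f)‖₂) · E[‖f(x)‖]` (i.e. one may take `c₀ = √2`). -/
theorem class_collision_hinge
    {d : ℕ} {X : Type*} [Fintype X] (t : ℕ) (ht : 0 < t)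
    (p : X → ℝ) (hp0 : ∀ x, 0 ≤ p x) (hp1 : ∑ x, p x = 1)
    (f : X → EuclideanSpace ℝ (Fin d))
    (μ : EuclideanSpace ℝ (Fin d)) (hμ : μ = ∑ x, p x • f x)
    (Sig : Matrix (Fin d) (Fin d) ℝ)
    (hSig : ∀ i j, Sig i j = ∑ x, p x * ((f x i - μ i) * (f x j - μ j))) :
    (∑ x, ∑ xp, ∑ xs : Fin t → X, p x * p xp * (∏ i, p (xs i)) *
        max 0 (1 + Finset.univ.sup' ⟨⟨0, ht⟩, Finset.mem_univ _⟩
          (fun i => -⟪f x, f xp - f (xs i)⟫))) - 1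
      ≤ Real.sqrt 2 * t *
        Real.sqrt ‖LinearMap.toContinuousLinearMap (Matrix.toEuclideanLin Sig)‖ *
        ∑ x, p x * ‖f x‖ := by
  set Q := LinearMap.toContinuousLinearMap (Matrix.toEuclideanLin Sig)
  have hloss (x xp : X) :
      ∑ xs : Fin t → X, (∏ i, p (xs i)) *
          max 0 (1 + univ.sup' ⟨⟨0, ht⟩, mem_univ _⟩ fun i => -⟪f x, f xp - f (xs i)⟫)
        ≤ 1 + t * ∑ y, p y * |⟪f x, f xp - f y⟫| :=
    calc _ ≤ ∑ xs : Fin t → X, (∏ i, p (xs i)) * (1 + ∑ i, |⟪f x, f xp - f (xs i)⟫|) := by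
          refine sum_le_sum fun xs _ => mul_le_mul_of_nonneg_left ?_
            (prod_nonneg fun i _ => hp0 _)
          simpa only [abs_neg] using max_zero_one_add_sup'_le_one_add_sum_abs univ
            ⟨⟨0, ht⟩, mem_univ _⟩ fun i => -⟪f x, f xp - f (xs i)⟫
      _ = _ := by
          simpa using sum_pi_prod_mul_one_add_sum (ι := Fin t) hp1 fun y => |⟪f x, f xp - f y⟫|
  calc _ = ∑ x, p x * ∑ xp, p xp * ∑ xs : Fin t → X, (∏ i, p (xs i)) *
          max 0 (1 + univ.sup' ⟨⟨0, ht⟩, mem_univ _⟩ fun i => -⟪f x, f xp - f (xs i)⟫) - 1 := by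
        simp only [mul_sum, mul_assoc]
    _ ≤ ∑ x, p x * ∑ xp, p xp * (1 + t * ∑ y, p y * |⟪f x, f xp - f y⟫|) - 1 := by
        gcongr with x _ xp _
        exacts [hp0 x, hp0 xp, hloss x xp]
    _ ≤ ∑ x, p x * (1 + t * (√2 * √‖Q‖ * ‖f x‖)) - 1 := by
        simp only [sum_mul_one_add_mul hp1]
        gcongr with x _
        exacts [hp0 x, sum_mul_sum_mul_abs_inner_sub_le p hp0 hp1 f μ hμ Sig hSig (f x)]
    _ = √2 * t * √‖Q‖ * ∑ x, p x * ‖f x‖ := by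
        rw [sum_mul_one_add_mul hp1, mul_sum, mul_sum]
        simp only [add_sub_cancel_left]
        exact sum_congr rfl fun x _ => by ring
end
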